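/- Recovery of the Boltzmann–Gibbs entropy: let W be a positive natural number and let p : Fin W → ℝ satisfy p_i > 0 for all i and ∑_{i} p_i = 1. Then the function q ↦ (1 - ∑_{i} p_i^q)/(1 - e^{1-q}) tends to ∑_{i} p_i · Real.log(1/p_i) as q → 1 (limit along the punctured neighborhood filter of 1 in ℝ). -/

import Mathlib

open Filter

theorem generalized_entropy_recovers_BG (W : ℕ) (hW : 0 < W) (p : Fin W → ℝ)
    (hp : ∀ i, 0 < p i) (hsum : ∑ i, p i = 1) :
    Tendsto (fun q : ℝ => (1 - ∑ i, p i ^ q) / (1 - (Real.exp 1) ^ (1 - q)))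
      (nhdsWithin 1 {(1 : ℝ)}ᶜ)
      (nhds (∑ i, p i * Real.log (1 / p i))) := by
  set f : ℝ → ℝ := fun q => 1 - ∑ i, p i ^ q with hfdef
  set g : ℝ → ℝ := fun q => 1 - (Real.exp 1) ^ (1 - q) with hgdef
  have hf1 : f 1 = 0 := by
    simp [hfdef, Real.rpow_one, hsum]
  have hg1 : g 1 = 0 := by
    simp [hgdef]
  have hf : HasDerivAt f (∑ i, p i * Real.log (1 / p i)) 1 := by
    have h : HasDerivAt (fun q : ℝ => ∑ i, p i ^ q) (∑ i, p i ^ (1:ℝ) * Real.log (p i)) 1 :=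
      HasDerivAt.fun_sum fun i _ => (Real.hasStrictDerivAt_const_rpow (hp i) 1).hasDerivAt
    have := (hasDerivAt_const (1:ℝ) (1:ℝ)).fun_sub h
    refine this.congr_deriv ?_
    rw [zero_sub, ← Finset.sum_neg_distrib]
    refine Finset.sum_congr rfl fun i _ => ?_
    rw [Real.rpow_one, Real.log_div one_ne_zero (hp i).ne', Real.log_one]
    ring
  have hg : HasDerivAt g 1 1 := by
    have hgeq : g = fun q : ℝ => 1 - Real.exp (1 - q) := by
      funext q; simp [hgdef, Real.exp_one_rpow]
    rw [hgeq]
    have h1 : HasDerivAt (fun q : ℝ => (1:ℝ) - q) (-1) 1 :=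
      by simpa using ((hasDerivAt_const (1:ℝ) (1:ℝ)).fun_sub (hasDerivAt_id 1))
    have h2 : HasDerivAt (fun q : ℝ => Real.exp (1 - q)) (Real.exp (1-1) * (-1)) 1 :=
      (Real.hasDerivAt_exp (1-1)).comp 1 h1
    have := (hasDerivAt_const (1:ℝ) (1:ℝ)).fun_sub h2
    refine this.congr_deriv ?_
    simp
  have hF := hasDerivAt_iff_tendsto_slope.mp hf
  have hG := hasDerivAt_iff_tendsto_slope.mp hg
  have hdiv := hF.div hG one_ne_zero
  rw [div_one] at hdiv
  refine hdiv.congr' ?_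
  filter_upwards [self_mem_nhdsWithin] with q hq
  have hq1 : q - 1 ≠ 0 := sub_ne_zero.mpr hq
  show slope f 1 q / slope g 1 q = f q / g q
  rw [slope_def_field, slope_def_field, hf1, hg1, sub_zero, sub_zero,
    div_div_div_cancel_right₀ _ _]
  exact hq1
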